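/- arXiv:1501.02552 — 5 statements merged into one kernel-verified Lean document; each statement's English description precedes it below -/
import Mathlib

section
/- For all j ∈ ℕ₀ and m ∈ {0,1,...,2^j − 1}, the number 2^j φ(m) is a natural number and φ(2^j φ(m)) = m / 2^j. -/
/-! For `m < 2^j`, `2^j φ(m)` is the number whose `j` binary digits are those of `m` in reverse
order; applying `φ` to it reverses them back, giving `m / 2^j`. -/

open MeasureTheory Finset

/-- Base-2 radical inverse: for `n = ∑ nᵢ 2ⁱ`, `radInv n = ∑ nᵢ 2^{-i-1}`. -/
noncomputable def radInv (n : ℕ) : ℝ :=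
  ∑ i ∈ Finset.range n, if n.testBit i then (1:ℝ)/2^(i+1) else 0

/-- L∞-normalized Haar function supported on `I_{j,m} = [m/2^j, (m+1)/2^j)`. -/
noncomputable def haarFn (j m : ℕ) (t : ℝ) : ℝ :=
  if (m:ℝ)/2^j ≤ t ∧ t < (m:ℝ)/2^j + 1/2^(j+1) then 1
  else if (m:ℝ)/2^j + 1/2^(j+1) ≤ t ∧ t < ((m:ℝ)+1)/2^j then -1
  else 0

/-- Local discrepancy of the first `N` terms of the sequence `x`. -/
noncomputable def disc (x : ℕ → ℝ) (N : ℕ) (t : ℝ) : ℝ :=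
  (∑ n ∈ Finset.range N, Set.indicator (Set.Ico (0:ℝ) t) (fun _ => (1:ℝ)) (x n)) / N - t

/-- Symmetrized van der Corput sequence: `z_{2m} = φ(m)`, `z_{2m+1} = 1 - φ(m)`. -/
noncomputable def vdcSym (n : ℕ) : ℝ :=
  if n % 2 = 0 then radInv (n / 2) else 1 - radInv (n / 2)

/-- Haar coefficient `μ_{j,m}` of the local discrepancy of the first `N` terms of `x`. -/
noncomputable def haarCoeff (x : ℕ → ℝ) (N j m : ℕ) : ℝ :=
  ∫ t in (0:ℝ)..1, disc x N t * haarFn j m t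

lemma radInv_zero : radInv 0 = 0 := by
  simp [radInv]

lemma radInv_eq_sum_range_of_le {n M : ℕ} (h : n ≤ M) :
    radInv n = ∑ i ∈ range M, if n.testBit i then (1:ℝ)/2^(i+1) else 0 := by
  refine sum_subset (range_subset_range.mpr h) fun i _ hi => ?_
  have hlt : n < 2 ^ i :=
    Nat.lt_two_pow_self.trans_le (Nat.pow_le_pow_right two_pos (not_lt.mp (mem_range.not.mp hi)))
  simp [Nat.testBit_lt_two_pow hlt]

lemma radInv_eq_mod_two_add_radInv_div_two (n : ℕ) :
    radInv n = ((n % 2 : ℕ) : ℝ) / 2 + radInv (n / 2) / 2 := by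
  rw [radInv_eq_sum_range_of_le (Nat.le_succ n), sum_range_succ',
    radInv_eq_sum_range_of_le (Nat.div_le_self n 2), sum_div, add_comm]
  congr 1
  · rcases Nat.mod_two_eq_zero_or_one n with h | h <;> simp [Nat.testBit_zero, h]
  · refine sum_congr rfl fun i _ => ?_
    rw [Nat.testBit_add_one]
    split_ifs <;> ring

lemma radInv_add_two_pow {k j : ℕ} (hk : k < 2 ^ j) :
    radInv (k + 2 ^ j) = radInv k + 1 / 2 ^ (j + 1) := by
  induction j generalizing k with
  | zero =>
    obtain rfl : k = 0 := by simpa using hk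
    simp [radInv_eq_mod_two_add_radInv_div_two 1, radInv_zero]
  | succ j ih =>
    have hmod : (k + 2 ^ (j + 1)) % 2 = k % 2 := by omega
    have hdiv : (k + 2 ^ (j + 1)) / 2 = k / 2 + 2 ^ j := by omega
    rw [radInv_eq_mod_two_add_radInv_div_two (k + _), hmod, hdiv, ih (by omega),
      radInv_eq_mod_two_add_radInv_div_two k]
    ring

def bitReverse : ℕ → ℕ → ℕ
  | 0, _ => 0
  | j + 1, m => bitReverse j (m / 2) + m % 2 * 2 ^ j

lemma bitReverse_lt_two_pow (j m : ℕ) : bitReverse j m < 2 ^ j := by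
  induction j generalizing m with
  | zero => simp [bitReverse]
  | succ j ih =>
    have := ih (m / 2)
    have := Nat.mod_lt m two_pos
    rw [bitReverse, pow_succ]
    nlinarith

lemma natCast_bitReverse {j m : ℕ} (hm : m < 2 ^ j) :
    (bitReverse j m : ℝ) = 2 ^ j * radInv m := by
  induction j generalizing m with
  | zero =>
    obtain rfl : m = 0 := by simpa using hm
    simp [bitReverse, radInv_zero]
  | succ j ih =>
    rw [bitReverse, Nat.cast_add, ih (by omega), radInv_eq_mod_two_add_radInv_div_two m]
    push_cast
    ring

lemma radInv_bitReverse {j m : ℕ} (hm : m < 2 ^ j) :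
    radInv (bitReverse j m) = m / 2 ^ j := by
  induction j generalizing m with
  | zero =>
    obtain rfl : m = 0 := by simpa using hm
    simp [bitReverse, radInv_zero]
  | succ j ih =>
    have hm' : (m : ℝ) = 2 * (m / 2 : ℕ) + (m % 2 : ℕ) := by exact_mod_cast (Nat.div_add_mod m 2).symm
    rcases Nat.mod_two_eq_zero_or_one m with h | h
    · rw [bitReverse, h, zero_mul, add_zero, ih (by omega), hm', h]
      push_cast
      ring
    · rw [bitReverse, h, one_mul, radInv_add_two_pow (bitReverse_lt_two_pow _ _), ih (by omega),
        hm', h]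
      push_cast
      ring

theorem radInv_two_pow_mul_radInv (j m : ℕ) (hm : m < 2^j) :
    ∃ k : ℕ, (k:ℝ) = 2^j * radInv m ∧ radInv k = (m:ℝ) / 2^j :=
  ⟨bitReverse j m, natCast_bitReverse hm, radInv_bitReverse hm⟩
end

section
/- For the symmetrized van der Corput sequence, the Haar coefficient μ_{-1,0} = ∫_0^1 D_N(t) dt of the local discrepancy satisfies μ_{-1,0} = 0 if N = 2M, and |μ_{-1,0}| = |1/(2N) − φ(M)/N| ≤ 1/(2N) if N = 2M+1. -/
open MeasureTheory Finset

/-! Exchanging sum and integral, `∫₀¹ D_N = (1/N) ∑_{n<N} (1 - z_n) - 1/2` for any sequence with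
values in `[0,1]`, since `∫₀¹ 1_{[0,t)}(z) dt = 1 - z`. The symmetrization makes consecutive terms
`z_{2m}, z_{2m+1}` add up to `1`, so the first `2M` terms contribute exactly `M`; for `N = 2M+1` the
leftover term `z_{2M} = φ(M) ∈ [0,1]` gives `(1/2 - φ(M))/N`. -/

lemma radInv_nonneg (n : ℕ) : 0 ≤ radInv n :=
  Finset.sum_nonneg fun i _ => by split_ifs <;> positivity

lemma radInv_le_one (n : ℕ) : radInv n ≤ 1 :=
  calc radInv n ≤ ∑ i ∈ range n, (1 / 2 : ℝ) ^ (i + 1) :=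
        Finset.sum_le_sum fun i _ => by split_ifs <;> simp
    _ = (∑ i ∈ range n, (1 / 2 : ℝ) ^ i) / 2 := by
      rw [Finset.sum_div]; exact Finset.sum_congr rfl fun i _ => by ring
    _ ≤ 1 := by linarith [sum_geometric_two_le n]

lemma vdcSym_two_mul (m : ℕ) : vdcSym (2 * m) = radInv m := by
  simp [vdcSym]

lemma vdcSym_two_mul_add_one (m : ℕ) : vdcSym (2 * m + 1) = 1 - radInv m := by
  simp [vdcSym, Nat.add_mod, Nat.add_div]

lemma vdcSym_mem_Icc (n : ℕ) : vdcSym n ∈ Set.Icc 0 1 := by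
  have := radInv_nonneg (n / 2)
  have := radInv_le_one (n / 2)
  unfold vdcSym
  split_ifs <;> constructor <;> linarith

lemma sum_range_two_mul_one_sub_vdcSym (M : ℕ) :
    ∑ n ∈ range (2 * M), (1 - vdcSym n) = M := by
  induction M with
  | zero => simp
  | succ M ih =>
    rw [Nat.mul_succ, sum_range_succ, sum_range_succ, ih, vdcSym_two_mul, vdcSym_two_mul_add_one]
    push_cast
    ring

lemma indicator_Ico_zero_apply_eq {c : ℝ} (hc : 0 ≤ c) (t : ℝ) :
    (Set.Ico 0 t).indicator (fun _ => (1 : ℝ)) c = (Set.Ioi c).indicator 1 t := by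
  simp [Set.indicator_apply, hc]

lemma integral_indicator_Ico_zero_apply {c : ℝ} (hc : c ∈ Set.Icc 0 1) :
    ∫ t in (0 : ℝ)..1, (Set.Ico 0 t).indicator (fun _ => (1 : ℝ)) c = 1 - c := by
  simp_rw [indicator_Ico_zero_apply_eq hc.1]
  rw [intervalIntegral.integral_of_le zero_le_one, integral_indicator_one measurableSet_Ioi,
    measureReal_restrict_apply measurableSet_Ioi, Set.inter_comm, Set.Ioc_inter_Ioi,
    sup_eq_right.2 hc.1, Real.volume_real_Ioc_of_le hc.2]

lemma intervalIntegrable_indicator_Ico_zero_apply (c : ℝ) :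
    IntervalIntegrable (fun t => (Set.Ico 0 t).indicator (fun _ => (1 : ℝ)) c) volume 0 1 :=
  Monotone.intervalIntegrable fun _ _ hst =>
    Set.indicator_le_indicator_of_subset (Set.Ico_subset_Ico_right hst) (fun _ => zero_le_one) c

lemma integral_disc_eq_of_mem_Icc {x : ℕ → ℝ} (hx : ∀ n, x n ∈ Set.Icc 0 1) (N : ℕ) :
    ∫ t in (0 : ℝ)..1, disc x N t = (∑ n ∈ range N, (1 - x n)) / N - 1 / 2 := by
  unfold disc
  rw [intervalIntegral.integral_sub, intervalIntegral.integral_div,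
    intervalIntegral.integral_finsetSum fun n _ => intervalIntegrable_indicator_Ico_zero_apply _]
  · simp [integral_indicator_Ico_zero_apply (hx _)]
  · simpa only [Finset.sum_apply] using
      (IntervalIntegrable.sum (range N) fun n _ =>
        intervalIntegrable_indicator_Ico_zero_apply (x n)).div_const (N : ℝ)
  · exact intervalIntegral.intervalIntegrable_id

theorem haarCoeff_neg_one_sym (N M : ℕ) (hN : 0 < N) :
    (N = 2*M → ∫ t in (0:ℝ)..1, disc vdcSym N t = 0) ∧
    (N = 2*M+1 →
      |∫ t in (0:ℝ)..1, disc vdcSym N t| = |1/(2*N) - radInv M / N| ∧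
      |∫ t in (0:ℝ)..1, disc vdcSym N t| ≤ 1/(2*N)) := by
  refine ⟨fun hNM => ?_, fun hNM => ?_⟩
  · subst hNM
    have hM : (M : ℝ) ≠ 0 := by norm_cast; omega
    rw [integral_disc_eq_of_mem_Icc vdcSym_mem_Icc, sum_range_two_mul_one_sub_vdcSym]
    push_cast
    field_simp
    ring
  · have hval : ∫ t in (0:ℝ)..1, disc vdcSym N t = (1 - 2 * radInv M) * (1 / (2 * N)) := by
      subst hNM
      rw [integral_disc_eq_of_mem_Icc vdcSym_mem_Icc, sum_range_succ,
        sum_range_two_mul_one_sub_vdcSym, vdcSym_two_mul]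
      push_cast
      field_simp
      ring
    have hφ : |1 - 2 * radInv M| ≤ 1 :=
      abs_le.2 ⟨by linarith [radInv_le_one M], by linarith [radInv_nonneg M]⟩
    have hN' : (0 : ℝ) < 1 / (2 * N) := by positivity
    refine ⟨by rw [hval]; ring_nf, ?_⟩
    rw [hval, abs_mul, abs_of_pos hN']
    exact mul_le_of_le_one_left hN'.le hφ
end

section
/- For a point x ∈ [0,1) in the open dyadic interval (m/2^j, (m+1)/2^j), the integral ∫_0^1 1_{[0,t)}(x) h_{j,m}(t) dt equals 2^{−j−1}(|2m + 1 − 2^{j+1} x| − 1), and this integral is 0 if x ∉ I_{j,m} or x = m/2^j. -/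
open MeasureTheory Finset

/-!
For `0 ≤ x` the integrand is `h_{j,m}` restricted to `(x, 1]`, so the integral is `∫_x^1 h_{j,m}`.
Writing `h_{j,m} = 1_{[a,c)} - 1_{[c,b)}` with `c` the midpoint of `I_{j,m} = [a, b)`, this is
`|[a,c) ∩ (x,1]| - |[c,b) ∩ (x,1]|`, which equals `|c - x| - 2^{-j-1}` for `x ∈ (a, b)` and vanishes
for `x ≤ a` (the two halves have equal length) and for `x ≥ b`.
-/

lemma integral_indicator_Ico_one {p q u v : ℝ} (huv : u ≤ v) :
    ∫ t in u..v, (Set.Ico p q).indicator (fun _ => (1 : ℝ)) t = max (min q v - max p u) 0 := by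
  have hae : (Set.Ioc u v ∩ Set.Ico p q : Set ℝ)
      =ᵐ[volume] (Set.Ioc u v ∩ Set.Ioc p q : Set ℝ) :=
    (ae_eq_refl _).inter Ico_ae_eq_Ioc
  rw [intervalIntegral.integral_of_le huv, setIntegral_indicator measurableSet_Ico,
    setIntegral_const, measureReal_congr hae, Set.Ioc_inter_Ioc, Real.volume_real_Ioc,
    smul_eq_mul, mul_one, max_comm u p, min_comm v q]

lemma intervalIntegrable_indicator_Ico_one (p q u v : ℝ) :
    IntervalIntegrable ((Set.Ico p q).indicator (fun _ => (1 : ℝ))) volume u v :=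
  intervalIntegrable_iff.2 <| (intervalIntegrable_iff.1
    (intervalIntegrable_const (c := (1 : ℝ)))).indicator measurableSet_Ico

lemma haarFn_eq_indicator_sub (j m : ℕ) :
    haarFn j m = (Set.Ico ((m:ℝ)/2^j) ((m:ℝ)/2^j + 1/2^(j+1))).indicator (fun _ => (1 : ℝ))
      - (Set.Ico ((m:ℝ)/2^j + 1/2^(j+1)) (((m:ℝ)+1)/2^j)).indicator (fun _ => (1 : ℝ)) := by
  ext t
  simp only [haarFn, Pi.sub_apply, Set.indicator_apply, Set.mem_Ico]
  split_ifs <;> grind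

lemma integral_haarFn {u v : ℝ} (j m : ℕ) (huv : u ≤ v) :
    ∫ t in u..v, haarFn j m t
      = max (min ((m:ℝ)/2^j + 1/2^(j+1)) v - max ((m:ℝ)/2^j) u) 0
        - max (min (((m:ℝ)+1)/2^j) v - max ((m:ℝ)/2^j + 1/2^(j+1)) u) 0 := by
  rw [haarFn_eq_indicator_sub]
  simp only [Pi.sub_apply]
  rw [intervalIntegral.integral_sub (intervalIntegrable_indicator_Ico_one _ _ _ _)
    (intervalIntegrable_indicator_Ico_one _ _ _ _), integral_indicator_Ico_one huv,
    integral_indicator_Ico_one huv]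

lemma integral_indicator_Ico_mul {f : ℝ → ℝ} {u v x : ℝ} (hux : u ≤ x) (hxv : x ≤ v) :
    ∫ t in u..v, (Set.Ico u t).indicator (fun _ => (1 : ℝ)) x * f t = ∫ t in x..v, f t := by
  have hintegrand : (fun t => (Set.Ico u t).indicator (fun _ => (1 : ℝ)) x * f t)
      = (Set.Ioi x).indicator f := by
    ext t
    by_cases hxt : x < t <;> simp [hux, hxt]
  rw [hintegrand, intervalIntegral.integral_of_le (hux.trans hxv),
    setIntegral_indicator measurableSet_Ioi, Set.Ioc_inter_Ioi, max_eq_right hux,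
    intervalIntegral.integral_of_le hxv]

lemma max_sub_sub_max_sub_of_mem_Ioo {a c b x : ℝ} (hcab : c - a = b - c)
    (hx : x ∈ Set.Ioo a b) :
    max (c - max a x) 0 - max (b - max c x) 0 = |c - x| - (b - c) := by
  obtain ⟨hax, hxb⟩ := hx
  rw [max_eq_right hax.le]
  rcases le_total x c with hxc | hcx
  · rw [max_eq_left hxc, max_eq_left (sub_nonneg.2 hxc), max_eq_left (by linarith),
      abs_of_nonneg (sub_nonneg.2 hxc)]
  · rw [max_eq_right hcx, max_eq_right (sub_nonpos.2 hcx), max_eq_left (by linarith),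
      abs_of_nonpos (sub_nonpos.2 hcx)]
    ring

lemma max_sub_sub_max_sub_eq_zero {a c b x : ℝ} (hac : a ≤ c) (hcab : c - a = b - c)
    (hx : x ≤ a ∨ b ≤ x) :
    max (c - max a x) 0 - max (b - max c x) 0 = 0 := by
  rcases hx with hxa | hbx
  · rw [max_eq_left hxa, max_eq_left (hxa.trans hac), max_eq_left (sub_nonneg.2 hac),
      max_eq_left (by linarith), hcab, sub_self]
  · have hcx : c ≤ x := by linarith
    rw [max_eq_right (hac.trans hcx), max_eq_right hcx, max_eq_right (sub_nonpos.2 hcx),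
      max_eq_right (sub_nonpos.2 hbx), sub_self]

lemma haarFn_right_half_length (j m : ℕ) :
    ((m:ℝ)+1)/2^j - ((m:ℝ)/2^j + 1/2^(j+1)) = 1/2^(j+1) := by
  field_simp
  ring

lemma one_div_two_pow_succ_mul_abs_sub_one (j m : ℕ) (x : ℝ) :
    (1/2^(j+1)) * (|2*(m:ℝ)+1 - 2^(j+1)*x| - 1)
      = |(m:ℝ)/2^j + 1/2^(j+1) - x| - 1/2^(j+1) := by
  have hscale : 2*(m:ℝ)+1 - 2^(j+1)*x = 2^(j+1) * ((m:ℝ)/2^j + 1/2^(j+1) - x) := by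
    field_simp
    ring
  rw [hscale, abs_mul, abs_of_pos (by positivity)]
  field_simp

lemma integral_haarFn_to_one {j m : ℕ} (hm : m < 2^j) {x : ℝ} (hx : x ≤ 1) :
    ∫ t in x..1, haarFn j m t
      = max ((m:ℝ)/2^j + 1/2^(j+1) - max ((m:ℝ)/2^j) x) 0
        - max (((m:ℝ)+1)/2^j - max ((m:ℝ)/2^j + 1/2^(j+1)) x) 0 := by
  have hb : ((m:ℝ)+1)/2^j ≤ 1 := by
    rw [div_le_one (by positivity)]
    exact_mod_cast hm
  have hcb := haarFn_right_half_length j m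
  have hc : (m:ℝ)/2^j + 1/2^(j+1) ≤ 1 := by
    linarith [show (0:ℝ) < 1/2^(j+1) by positivity]
  rw [integral_haarFn j m hx, min_eq_left hc, min_eq_left hb]

theorem integral_indicator_haar (j m : ℕ) (hm : m < 2^j) (x : ℝ)
    (hx : x ∈ Set.Ico (0:ℝ) 1) :
    (x ∈ Set.Ioo ((m:ℝ)/2^j) (((m:ℝ)+1)/2^j) →
      ∫ t in (0:ℝ)..1, Set.indicator (Set.Ico (0:ℝ) t) (fun _ => (1:ℝ)) x * haarFn j m t
        = (1/2^(j+1)) * (|2*(m:ℝ)+1 - 2^(j+1)*x| - 1)) ∧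
    ((x ∉ Set.Ico ((m:ℝ)/2^j) (((m:ℝ)+1)/2^j) ∨ x = (m:ℝ)/2^j) →
      ∫ t in (0:ℝ)..1, Set.indicator (Set.Ico (0:ℝ) t) (fun _ => (1:ℝ)) x * haarFn j m t
        = 0) := by
  have hac : (m:ℝ)/2^j ≤ (m:ℝ)/2^j + 1/2^(j+1) := le_add_of_nonneg_right (by positivity)
  have hcab : (m:ℝ)/2^j + 1/2^(j+1) - (m:ℝ)/2^j
      = ((m:ℝ)+1)/2^j - ((m:ℝ)/2^j + 1/2^(j+1)) := by
    rw [add_sub_cancel_left, haarFn_right_half_length]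
  rw [integral_indicator_Ico_mul hx.1 hx.2.le, integral_haarFn_to_one hm hx.2.le]
  refine ⟨fun hxI => ?_, fun hxI => max_sub_sub_max_sub_eq_zero hac hcab ?_⟩
  · rw [max_sub_sub_max_sub_of_mem_Ioo hcab hxI, haarFn_right_half_length,
      one_div_two_pow_succ_mul_abs_sub_one]
  · rcases hxI with hxI | hxI
    · by_contra! h
      exact hxI ⟨h.1.le, h.2⟩
    · exact Or.inl hxI.le
end

section
/- For the van der Corput sequence (φ(n))_{n≥0}, if j ≥ ⌈log₂ N⌉ then the Haar coefficient of the local discrepancy of the first N terms satisfies |μ^{N,φ}_{j,m}| = 2^{−2j−2} for every m ∈ {0,...,2^j−1}. -/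
open MeasureTheory Finset

/-!
For `N ≤ 2^j` the points `φ(0), …, φ(N-1)` all lie on the grid `2^{-j} ℕ`, so no point falls in
the interior of `I_{j,m}` and the counting part of `D_N` is a constant `c` there: `D_N(t) = c - t`
on `I_{j,m}`. The Haar function integrates constants to zero, and the remaining term
`-∫ t h_{j,m}(t) dt` is the square of the half-length `2^{-j-1}` of `I_{j,m}`.
-/

open Set intervalIntegral

lemma radInv_eq_natCast_div_two_pow {n j : ℕ} (h : n < 2 ^ j) :
    ∃ k : ℕ, radInv n = k / 2 ^ j := by
  refine ⟨∑ i ∈ range n, if n.testBit i then 2 ^ (j - (i + 1)) else 0, ?_⟩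
  rw [radInv, Nat.cast_sum, sum_div]
  refine sum_congr rfl fun i _ => ?_
  split_ifs with hi
  · have hij : i < j := by
      by_contra! hji
      rw [Nat.testBit_eq_false_of_lt (h.trans_le (Nat.pow_le_pow_right two_pos hji))] at hi
      exact Bool.false_ne_true hi
    rw [Nat.cast_pow, Nat.cast_ofNat, div_eq_div_iff (by positivity) (by positivity), one_mul,
      ← pow_add]
    congr 1
    omega
  · simp

lemma natCast_div_lt_iff_of_mem_Ioc {d t : ℝ} {k m : ℕ} (hd : 0 < d)
    (ht : t ∈ Ioc ((m : ℝ) / d) ((m + 1) / d)) : (k : ℝ) / d < t ↔ k ≤ m := by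
  constructor
  · intro hkt
    by_contra! hmk
    have : ((m : ℝ) + 1) / d ≤ k / d := by gcongr; exact_mod_cast hmk
    linarith [ht.2]
  · intro hkm
    have : (k : ℝ) / d ≤ m / d := by gcongr
    linarith [ht.1]

lemma disc_add_self_eq_of_mem_Ioc {x : ℕ → ℝ} {N m : ℕ} {d t : ℝ} (hd : 0 < d)
    (hx : ∀ n < N, ∃ k : ℕ, x n = k / d) (ht : t ∈ Ioc ((m : ℝ) / d) ((m + 1) / d)) :
    disc x N t + t = disc x N ((m + 1) / d) + (m + 1) / d := by
  have hend : ((m : ℝ) + 1) / d ∈ Ioc ((m : ℝ) / d) ((m + 1) / d) :=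
    ⟨by gcongr; linarith, le_rfl⟩
  simp only [disc, sub_add_cancel]
  congr 1
  refine sum_congr rfl fun n hn => ?_
  obtain ⟨k, hk⟩ := hx n (mem_range.1 hn)
  have hk0 : (0 : ℝ) ≤ k / d := by positivity
  simp only [hk, indicator_apply, Set.mem_Ico, hk0, true_and,
    natCast_div_lt_iff_of_mem_Ioc hd ht, natCast_div_lt_iff_of_mem_Ioc hd hend]

lemma intervalIntegrable_disc (x : ℕ → ℝ) (N : ℕ) (a b : ℝ) :
    IntervalIntegrable (disc x N) volume a b := by
  have hcount : Monotone fun t : ℝ =>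
      (∑ n ∈ range N, (Ico 0 t).indicator (fun _ => (1 : ℝ)) (x n)) / N :=
    fun s t hst => div_le_div_of_nonneg_right (sum_le_sum fun n _ =>
      indicator_le_indicator_of_subset (Ico_subset_Ico_right hst) (fun _ => zero_le_one) _)
      N.cast_nonneg
  exact hcount.intervalIntegrable.sub intervalIntegral.intervalIntegrable_id

lemma succ_div_two_pow_eq (j m : ℕ) :
    ((m : ℝ) + 1) / 2 ^ j = m / 2 ^ j + 1 / 2 ^ (j + 1) + 1 / 2 ^ (j + 1) := by
  rw [pow_succ]; field_simp; ring

lemma haarFn_of_lt {j m : ℕ} {t : ℝ} (ht : t < (m : ℝ) / 2 ^ j) : haarFn j m t = 0 := by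
  have : (0 : ℝ) < 1 / 2 ^ (j + 1) := by positivity
  rw [haarFn, if_neg (by intro h; linarith [h.1]), if_neg (by intro h; linarith [h.1])]

lemma haarFn_of_le {j m : ℕ} {t : ℝ} (ht : ((m : ℝ) + 1) / 2 ^ j ≤ t) : haarFn j m t = 0 := by
  have := succ_div_two_pow_eq j m
  have : (0 : ℝ) < 1 / 2 ^ (j + 1) := by positivity
  rw [haarFn, if_neg (by intro h; linarith [h.2]), if_neg (by intro h; linarith [h.2])]

lemma haarFn_of_mem_Ico_left {j m : ℕ} {t : ℝ}
    (ht : t ∈ Ico ((m : ℝ) / 2 ^ j) (m / 2 ^ j + 1 / 2 ^ (j + 1))) : haarFn j m t = 1 := by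
  rw [haarFn, if_pos (Set.mem_Ico.1 ht)]

lemma haarFn_of_mem_Ico_right {j m : ℕ} {t : ℝ}
    (ht : t ∈ Ico ((m : ℝ) / 2 ^ j + 1 / 2 ^ (j + 1)) ((m + 1) / 2 ^ j)) :
    haarFn j m t = -1 := by
  rw [haarFn, if_neg (by intro h; linarith [h.2, ht.1]), if_pos (Set.mem_Ico.1 ht)]

lemma intervalIntegral_mul_of_eqOn_Ioo {g h : ℝ → ℝ} {u v c : ℝ} (huv : u ≤ v)
    (hg : IntervalIntegrable g volume u v) (hh : EqOn h (fun _ => c) (Ioo u v)) :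
    IntervalIntegrable (fun t => g t * h t) volume u v ∧
      ∫ t in u..v, g t * h t = c * ∫ t in u..v, g t := by
  have hgh : EqOn (fun t => g t * c) (fun t => g t * h t) (uIoo u v) := by
    rw [uIoo_of_le huv]
    intro t ht
    simp only [hh ht]
  refine ⟨(hg.mul_const c).congr_uIoo hgh, ?_⟩
  rw [← integral_congr_uIoo hgh, intervalIntegral.integral_mul_const, mul_comm]

lemma integral_mul_haarFn {g : ℝ → ℝ} {p q : ℝ} {j m : ℕ} (hp : p ≤ (m : ℝ) / 2 ^ j)
    (hq : ((m : ℝ) + 1) / 2 ^ j ≤ q) (hg : IntervalIntegrable g volume p q) :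
    ∫ t in p..q, g t * haarFn j m t =
      (∫ t in (m : ℝ) / 2 ^ j..m / 2 ^ j + 1 / 2 ^ (j + 1), g t) -
        ∫ t in (m : ℝ) / 2 ^ j + 1 / 2 ^ (j + 1)..(m + 1) / 2 ^ j, g t := by
  set a := (m : ℝ) / 2 ^ j
  set c := a + 1 / 2 ^ (j + 1)
  set b := ((m : ℝ) + 1) / 2 ^ j
  have hac : a ≤ c := le_add_of_nonneg_right (by positivity)
  have hcb : c ≤ b := by
    simp only [b, c, succ_div_two_pow_eq j m]
    exact le_add_of_nonneg_right (by positivity)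
  have hpq : p ≤ q := by linarith
  have hg' : ∀ {u v}, p ≤ u → u ≤ q → p ≤ v → v ≤ q → IntervalIntegrable g volume u v :=
    fun hpu huq hpv hvq =>
      hg.mono_set (uIcc_subset_uIcc (mem_uIcc_of_le hpu huq) (mem_uIcc_of_le hpv hvq))
  obtain ⟨i₁, e₁⟩ := intervalIntegral_mul_of_eqOn_Ioo hp (hg' le_rfl hpq hp (by linarith))
    fun t ht => haarFn_of_lt ht.2
  obtain ⟨i₂, e₂⟩ := intervalIntegral_mul_of_eqOn_Ioo hac
    (hg' hp (by linarith) (by linarith) (by linarith))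
    fun t ht => haarFn_of_mem_Ico_left ⟨ht.1.le, ht.2⟩
  obtain ⟨i₃, e₃⟩ := intervalIntegral_mul_of_eqOn_Ioo hcb
    (hg' (by linarith) (by linarith) (by linarith) hq)
    fun t ht => haarFn_of_mem_Ico_right ⟨ht.1.le, ht.2⟩
  obtain ⟨i₄, e₄⟩ := intervalIntegral_mul_of_eqOn_Ioo hq (hg' (by linarith) hq hpq le_rfl)
    fun t ht => haarFn_of_le ht.1.le
  rw [← integral_add_adjacent_intervals (i₁.trans (i₂.trans i₃)) i₄,
    ← integral_add_adjacent_intervals (i₁.trans i₂) i₃,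
    ← integral_add_adjacent_intervals i₁ i₂, e₁, e₂, e₃, e₄]
  ring

lemma integral_sub_integral_of_eqOn_const_sub {g : ℝ → ℝ} {a b c k : ℝ} (hab : a ≤ b)
    (hmid : c - a = b - c) (hg : EqOn g (fun t => k - t) (Ioo a b)) :
    (∫ t in a..c, g t) - ∫ t in c..b, g t = (c - a) ^ 2 := by
  have hac : a ≤ c := by linarith
  have hcb : c ≤ b := by linarith
  rw [integral_congr_Ioo_of_le hac (hg.mono (Ioo_subset_Ioo_right hcb)),
    integral_congr_Ioo_of_le hcb (hg.mono (Ioo_subset_Ioo_left hac)),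
    integral_sub intervalIntegrable_const intervalIntegral.intervalIntegrable_id,
    integral_sub intervalIntegrable_const intervalIntegral.intervalIntegrable_id,
    intervalIntegral.integral_const, intervalIntegral.integral_const, integral_id, integral_id,
    smul_eq_mul, smul_eq_mul,
    show b = 2 * c - a by linarith]
  ring

theorem haarCoeff_vdc_large_j_general (N j m : ℕ)
    (hj : Nat.clog 2 N ≤ j) (hm : m < 2^j) :
    |haarCoeff (fun n => radInv n) N j m| = 1/2^(2*j+2) := by
  have hN : N ≤ 2 ^ j := (Nat.clog_le_iff_le_pow one_lt_two).1 hj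
  have hdyadic : ∀ n < N, ∃ k : ℕ, radInv n = k / 2 ^ j :=
    fun n hn => radInv_eq_natCast_div_two_pow (hn.trans_le hN)
  have hcell : ((m : ℝ) + 1) / 2 ^ j ≤ 1 := by
    rw [div_le_one (by positivity)]
    exact_mod_cast hm
  have hmid : ((m : ℝ) / 2 ^ j + 1 / 2 ^ (j + 1)) - m / 2 ^ j =
      (m + 1) / 2 ^ j - (m / 2 ^ j + 1 / 2 ^ (j + 1)) := by
    rw [succ_div_two_pow_eq j m]; ring
  have hdisc : EqOn (disc (fun n => radInv n) N)
      (fun t => (disc (fun n => radInv n) N ((m + 1) / 2 ^ j) + (m + 1) / 2 ^ j) - t)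
      (Ioo ((m : ℝ) / 2 ^ j) ((m + 1) / 2 ^ j)) := fun t ht =>
    eq_sub_of_add_eq (disc_add_self_eq_of_mem_Ioc (by positivity) hdyadic (Ioo_subset_Ioc_self ht))
  rw [haarCoeff, integral_mul_haarFn (by positivity) hcell (intervalIntegrable_disc _ _ _ _),
    integral_sub_integral_of_eqOn_const_sub (by gcongr; linarith) hmid hdisc, add_sub_cancel_left,
    abs_of_nonneg (by positivity), div_pow, one_pow, ← pow_mul]
  ring_nf

theorem haarCoeff_vdc_large_j (N j m : ℕ) (hN : 0 < N)
    (hj : Nat.clog 2 N ≤ j) (hm : m < 2^j) :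
    |haarCoeff (fun n => radInv n) N j m| = 1/2^(2*j+2) :=
  haarCoeff_vdc_large_j_general N j m hj hm
end

section
/- For every p ∈ (1, ∞) there exists a constant C_p > 0 such that the L_p-discrepancy of the first N terms of the symmetrized van der Corput sequence satisfies L_{p,N} ≤ C_p √(log N)/N for all N ≥ 2. -/
/-!
Split `N = 2n` or `2n + 1` and `n = 2^{l₁} + 2^{l₂} + ⋯` with `l₁ > l₂ > ⋯`. Up to an error
bounded by `1`, `N D_N` is the sum of the counting discrepancies of the dyadic blocks of the
points `φ(r), 1 - φ(r)`. The block of size `2^l` consists of two shifted copies of the grid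
`2^{-l} ℤ`, so on every dyadic interval of length `2^{-l}` it has mean zero and is bounded by `2`,
while all later, smaller blocks oscillate there by at most `2`. The blocks thus behave like
martingale differences for the dyadic filtration, which gives the subgaussian bound
`∫ exp(λ N D_N) ≲ exp(16 λ² s)` for `|λ| ≤ 1/4`, where `s ≤ log₂ N` is the number of blocks.
Taking `λ = 1/(4√s)` bounds every moment `∫ |N D_N|^m` by `C_m s^{m/2}`, and `L_p ≤ 2 L_{⌈p⌉}`.
-/

open MeasureTheory Finset

namespace VdC

lemma sum_range_two_mul {M : Type*} [AddCommMonoid M] (n : ℕ) (f : ℕ → M) :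
    ∑ i ∈ range (2 * n), f i = ∑ i ∈ range n, (f (2 * i) + f (2 * i + 1)) := by
  induction n with
  | zero => simp
  | succ n ih => rw [mul_add_one, sum_range_succ, sum_range_succ, sum_range_succ, ih, add_assoc]

lemma intervalIntegrable_comp_of_abs_le {f g : ℝ → ℝ} {a b C : ℝ} (hg : Continuous g)
    (hf : Measurable f) (hC : ∀ t ∈ Set.uIoc a b, |f t| ≤ C) :
    IntervalIntegrable (fun t => g (f t)) volume a b := by
  obtain ⟨K, hK⟩ := (isCompact_Icc (a := -C) (b := C)).exists_bound_of_continuousOn hg.continuousOn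
  exact IntervalIntegrable.mono_fun' (g := fun _ => K) intervalIntegrable_const
    (hg.measurable.comp hf).aestronglyMeasurable
    ((ae_restrict_iff' measurableSet_uIoc).2 (.of_forall fun t ht => hK _ (abs_le.1 (hC t ht))))

lemma uIcc_atom_subset {n i : ℕ} {h : ℝ} (hi : i < n) (hnh : n * h = 1) :
    Set.uIcc (i * h) ((i + 1) * h) ⊆ Set.uIcc 0 1 := by
  have hh : 0 < h := pos_of_mul_pos_right (hnh ▸ one_pos) n.cast_nonneg
  have : (i:ℝ) + 1 ≤ n := by exact_mod_cast hi
  rw [Set.uIcc_of_le (by nlinarith), Set.uIcc_of_le zero_le_one]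
  exact Set.Icc_subset_Icc (by positivity) (by nlinarith)

lemma integral_eq_sum_atoms {g : ℝ → ℝ} {n : ℕ} {h : ℝ} (hnh : n * h = 1)
    (hg : IntervalIntegrable g volume 0 1) :
    ∫ t in 0..1, g t = ∑ i ∈ range n, ∫ t in i * h..(i + 1) * h, g t := by
  have := intervalIntegral.sum_integral_adjacent_intervals (a := fun i : ℕ => i * h) (f := g)
    (μ := volume) (n := n) fun k hk => by
      simpa using hg.mono_set (uIcc_atom_subset hk hnh)
  push_cast at this
  rw [this, zero_mul, hnh]

lemma abs_sub_average_le {f : ℝ → ℝ} {a b K t : ℝ} (hab : a < b)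
    (hf : IntervalIntegrable f volume a b) (hosc : ∀ u ∈ Set.Icc a b, |f t - f u| ≤ K) :
    |f t - (b - a)⁻¹ * ∫ u in a..b, f u| ≤ K := by
  have hba : 0 < b - a := sub_pos.2 hab
  have hint : |∫ u in a..b, (f t - f u)| ≤ K * (b - a) := by
    simpa [abs_of_pos hba] using intervalIntegral.norm_integral_le_of_norm_le_const
      (a := a) (b := b) (f := fun u => f t - f u) fun u hu => by
        rw [Set.uIoc_of_le hab.le] at hu
        exact hosc u (Set.Ioc_subset_Icc_self hu)
  rw [intervalIntegral.integral_sub intervalIntegrable_const hf, intervalIntegral.integral_const,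
    smul_eq_mul] at hint
  rw [show f t - (b - a)⁻¹ * ∫ u in a..b, f u = (b - a)⁻¹ * ((b - a) * f t - ∫ u in a..b, f u) by
    field_simp, abs_mul, abs_of_pos (inv_pos.2 hba)]
  calc (b - a)⁻¹ * |(b - a) * f t - ∫ u in a..b, f u| ≤ (b - a)⁻¹ * (K * (b - a)) := by gcongr
    _ = K := by field_simp

lemma integral_const_add_mul_sub {f : ℝ → ℝ} {a b : ℝ} (hf : IntervalIntegrable f volume a b)
    (A B c : ℝ) :
    ∫ t in a..b, (A + B * (f t - c)) = A * (b - a) + B * ((∫ t in a..b, f t) - c * (b - a)) := by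
  rw [intervalIntegral.integral_add intervalIntegrable_const
      ((hf.sub intervalIntegrable_const).const_mul B), intervalIntegral.integral_const_mul,
    intervalIntegral.integral_sub hf intervalIntegrable_const, intervalIntegral.integral_const,
    intervalIntegral.integral_const]
  simp only [smul_eq_mul]
  ring

/-- Jensen's inequality for `exp`, via its tangent line at `lam * c`. -/
lemma exp_mul_le_integral_exp {g : ℝ → ℝ} {a b c lam : ℝ} (hab : a ≤ b)
    (hg : IntervalIntegrable g volume a b)
    (hexp : IntervalIntegrable (fun t => Real.exp (lam * g t)) volume a b)
    (hgc : ∫ t in a..b, g t = c * (b - a)) :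
    Real.exp (lam * c) * (b - a) ≤ ∫ t in a..b, Real.exp (lam * g t) := by
  have hpt : ∀ t ∈ Set.Icc a b,
      Real.exp (lam * c) + Real.exp (lam * c) * lam * (g t - c) ≤ Real.exp (lam * g t) := by
    intro t _
    have := Real.add_one_le_exp (lam * (g t - c))
    calc Real.exp (lam * c) + Real.exp (lam * c) * lam * (g t - c)
        = Real.exp (lam * c) * (lam * (g t - c) + 1) := by ring
      _ ≤ Real.exp (lam * c) * Real.exp (lam * (g t - c)) := by gcongr
      _ = Real.exp (lam * g t) := by rw [← Real.exp_add]; ring_nf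
  have := intervalIntegral.integral_mono_on hab
    (intervalIntegrable_const.add ((hg.sub intervalIntegrable_const).const_mul _)) hexp hpt
  rwa [integral_const_add_mul_sub hg, hgc, sub_self, mul_zero, add_zero] at this

lemma integral_exp_le_of_abs_sub_le {f : ℝ → ℝ} {a b c K lam : ℝ} (hab : a ≤ b)
    (hf : IntervalIntegrable f volume a b)
    (hexp : IntervalIntegrable (fun t => Real.exp (lam * f t)) volume a b)
    (hfc : ∫ t in a..b, f t = c * (b - a)) (hdev : ∀ t ∈ Set.Icc a b, |f t - c| ≤ K)
    (hK : |lam| * K ≤ 1) :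
    ∫ t in a..b, Real.exp (lam * f t) ≤ (1 + (lam * K) ^ 2) * Real.exp (lam * c) * (b - a) := by
  have hpt : ∀ t ∈ Set.Icc a b, Real.exp (lam * f t)
      ≤ Real.exp (lam * c) * (1 + (lam * K) ^ 2) + Real.exp (lam * c) * lam * (f t - c) := by
    intro t ht
    have hx : |lam * (f t - c)| ≤ |lam| * K := by
      rw [abs_mul]; exact mul_le_mul_of_nonneg_left (hdev t ht) (abs_nonneg lam)
    have hsq : (lam * (f t - c)) ^ 2 ≤ (lam * K) ^ 2 :=
      calc (lam * (f t - c)) ^ 2 = |lam * (f t - c)| ^ 2 := (sq_abs _).symm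
        _ ≤ (|lam| * K) ^ 2 := pow_le_pow_left₀ (abs_nonneg _) hx 2
        _ = (lam * K) ^ 2 := by rw [mul_pow, sq_abs, mul_pow]
    have := (abs_le.1 (Real.abs_exp_sub_one_sub_id_le (hx.trans hK))).2
    calc Real.exp (lam * f t) = Real.exp (lam * c) * Real.exp (lam * (f t - c)) := by
          rw [← Real.exp_add]; ring_nf
      _ ≤ Real.exp (lam * c) * (1 + (lam * K) ^ 2 + lam * (f t - c)) := by gcongr; linarith
      _ = _ := by ring
  have := intervalIntegral.integral_mono_on hab hexp
    (intervalIntegrable_const.add ((hf.sub intervalIntegrable_const).const_mul _)) hpt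
  rw [integral_const_add_mul_sub hf, hfc, sub_self, mul_zero, add_zero] at this
  linarith

lemma abs_pow_le_exp_add_exp (x : ℝ) {lam : ℝ} (hlam : 0 < lam) (m : ℕ) :
    |x| ^ m ≤ m.factorial / lam ^ m * (Real.exp (lam * x) + Real.exp (-lam * x)) := by
  have hexp : Real.exp (lam * |x|) ≤ Real.exp (lam * x) + Real.exp (-lam * x) := by
    rcases abs_cases x with ⟨hx, _⟩ | ⟨hx, _⟩ <;> rw [hx]
    · linarith [Real.exp_pos (-lam * x)]
    · rw [mul_neg, ← neg_mul]; linarith [Real.exp_pos (lam * x)]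
  calc |x| ^ m = m.factorial / lam ^ m * ((lam * |x|) ^ m / m.factorial) := by
        field_simp; ring
    _ ≤ m.factorial / lam ^ m * Real.exp (lam * |x|) := by
        gcongr; exact Real.pow_div_factorial_le_exp _ (by positivity) m
    _ ≤ _ := by gcongr

lemma integral_abs_pow_le_of_integral_exp_le {F : ℝ → ℝ} {a b lam B : ℝ} (m : ℕ) (hab : a ≤ b)
    (hlam : 0 < lam) (hF : IntervalIntegrable (fun t => |F t| ^ m) volume a b)
    (hexp₁ : IntervalIntegrable (fun t => Real.exp (lam * F t)) volume a b)
    (hexp₂ : IntervalIntegrable (fun t => Real.exp (-lam * F t)) volume a b)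
    (hB₁ : ∫ t in a..b, Real.exp (lam * F t) ≤ B) (hB₂ : ∫ t in a..b, Real.exp (-lam * F t) ≤ B) :
    ∫ t in a..b, |F t| ^ m ≤ m.factorial / lam ^ m * (2 * B) := by
  calc ∫ t in a..b, |F t| ^ m
      ≤ ∫ t in a..b, m.factorial / lam ^ m * (Real.exp (lam * F t) + Real.exp (-lam * F t)) :=
        intervalIntegral.integral_mono_on hab hF ((hexp₁.add hexp₂).const_mul _)
          fun t _ => abs_pow_le_exp_add_exp (F t) hlam m
    _ ≤ m.factorial / lam ^ m * (2 * B) := by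
        rw [intervalIntegral.integral_const_mul, intervalIntegral.integral_add hexp₁ hexp₂]
        gcongr
        linarith

lemma rpow_le_add_mul_pow {x Q p : ℝ} {m : ℕ} (hx : 0 ≤ x) (hQ : 0 < Q) (hp : 0 ≤ p)
    (hpm : p ≤ m) : x ^ p ≤ Q ^ p + Q ^ (p - m) * x ^ m := by
  rcases le_or_gt x Q with hxQ | hQx
  · have := Real.rpow_le_rpow hx hxQ hp
    have : 0 ≤ Q ^ (p - m) * x ^ m := by positivity
    linarith
  · have hx₀ : 0 < x := hQ.trans hQx
    calc x ^ p = x ^ m * x ^ (p - m) := by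
          rw [← Real.rpow_natCast, ← Real.rpow_add hx₀]; ring_nf
      _ ≤ x ^ m * Q ^ (p - m) :=
          mul_le_mul_of_nonneg_left (Real.rpow_le_rpow_of_nonpos hQ hQx.le (by linarith))
            (by positivity)
      _ ≤ Q ^ p + Q ^ (p - m) * x ^ m := by
          rw [mul_comm]; linarith [Real.rpow_nonneg hQ.le p]

lemma integral_rpow_le_of_integral_pow_le {f : ℝ → ℝ} {p Q : ℝ} {m : ℕ} (hp : 0 < p)
    (hpm : p ≤ m) (hQ : 0 < Q) (hfp : IntervalIntegrable (fun t => |f t| ^ p) volume 0 1)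
    (hfm : IntervalIntegrable (fun t => |f t| ^ m) volume 0 1)
    (h : ∫ t in 0..1, |f t| ^ m ≤ Q ^ m) :
    (∫ t in 0..1, |f t| ^ p) ^ (1 / p) ≤ 2 ^ (1 / p) * Q := by
  have hint : ∫ t in 0..1, |f t| ^ p ≤ 2 * Q ^ p :=
    calc ∫ t in 0..1, |f t| ^ p ≤ ∫ t in 0..1, (Q ^ p + Q ^ (p - m) * |f t| ^ m) :=
          intervalIntegral.integral_mono_on zero_le_one hfp
            (intervalIntegrable_const.add (hfm.const_mul _))
            fun t _ => rpow_le_add_mul_pow (abs_nonneg _) hQ hp.le hpm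
      _ = Q ^ p + Q ^ (p - m) * ∫ t in 0..1, |f t| ^ m := by
          rw [intervalIntegral.integral_add intervalIntegrable_const (hfm.const_mul _),
            intervalIntegral.integral_const, intervalIntegral.integral_const_mul]
          simp
      _ ≤ Q ^ p + Q ^ (p - m) * Q ^ m := by gcongr
      _ = 2 * Q ^ p := by
          rw [← Real.rpow_natCast, ← Real.rpow_add hQ]; ring_nf
  calc (∫ t in 0..1, |f t| ^ p) ^ (1 / p) ≤ (2 * Q ^ p) ^ (1 / p) := by
        gcongr
        exact intervalIntegral.integral_nonneg zero_le_one fun t _ => by positivity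
    _ = 2 ^ (1 / p) * Q := by
        rw [Real.mul_rpow zero_le_two (by positivity), ← Real.rpow_mul hQ.le, mul_one_div_cancel hp.ne',
          Real.rpow_one]

lemma radInv_eq_sum_of_le {m L : ℕ} (h : m ≤ L) :
    radInv m = ∑ i ∈ range L, if m.testBit i then (1:ℝ) / 2 ^ (i + 1) else 0 := by
  refine sum_subset (range_subset_range.2 h) fun i _ hi => ?_
  have : m < 2 ^ i := (Nat.lt_two_pow_self).trans_le
    (Nat.pow_le_pow_right two_pos (not_lt.1 (mem_range.not.1 hi)))
  simp [Nat.testBit_eq_false_of_lt this]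

lemma radInv_eq_mod_add_div (m : ℕ) :
    radInv m = (if m % 2 = 1 then (1:ℝ) / 2 else 0) + radInv (m / 2) / 2 := by
  rw [radInv_eq_sum_of_le m.le_succ, sum_range_succ',
    radInv_eq_sum_of_le (Nat.div_le_self m 2), sum_div, add_comm]
  congr 1
  · by_cases h : m % 2 = 1 <;> simp [Nat.testBit_zero, h]
  · refine sum_congr rfl fun i _ => ?_
    rw [Nat.testBit_add_one]
    split <;> simp [pow_succ]
    ring

lemma radInv_two_mul (q : ℕ) : radInv (2 * q) = radInv q / 2 := by
  simp [radInv_eq_mod_add_div (2 * q)]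

lemma radInv_two_mul_add_one (q : ℕ) : radInv (2 * q + 1) = 1 / 2 + radInv q / 2 := by
  rw [radInv_eq_mod_add_div, if_pos (by omega), show (2 * q + 1) / 2 = q by omega]

lemma radInv_nonneg (m : ℕ) : 0 ≤ radInv m :=
  sum_nonneg fun _ _ => by split <;> positivity

lemma radInv_le_one_sub {l q : ℕ} (hq : q < 2 ^ l) : radInv q ≤ 1 - (2 ^ l : ℝ)⁻¹ := by
  induction l generalizing q with
  | zero => simp [show q = 0 by simpa using hq, radInv]
  | succ l ih =>
    have := ih (q := q / 2) (by rw [pow_succ] at hq; omega)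
    rw [radInv_eq_mod_add_div q, pow_succ, mul_inv]
    split <;> nlinarith [radInv_nonneg (q / 2)]

lemma radInv_lt_one (m : ℕ) : radInv m < 1 := by
  linarith [radInv_le_one_sub (Nat.lt_two_pow_self (n := m)),
    inv_pos.2 (pow_pos two_pos m : (0:ℝ) < 2 ^ m)]

lemma inv_two_pow_le_abs_radInv_sub {l q q' : ℕ} (hq : q < 2 ^ l) (hq' : q' < 2 ^ l)
    (hne : q ≠ q') : (2 ^ l : ℝ)⁻¹ ≤ |radInv q - radInv q'| := by
  induction l generalizing q q' with
  | zero => omega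
  | succ l ih =>
    rw [pow_succ] at hq hq'
    rw [radInv_eq_mod_add_div q, radInv_eq_mod_add_div q', pow_succ, mul_inv]
    by_cases hmod : q % 2 = q' % 2
    · have := ih (q := q / 2) (q' := q' / 2) (by omega) (by omega) (by omega)
      rw [hmod, add_sub_add_left_eq_sub, ← sub_div, abs_div, abs_two]
      linarith
    · have h₁ := radInv_le_one_sub (l := l) (q := q / 2) (by omega)
      have h₂ := radInv_le_one_sub (l := l) (q := q' / 2) (by omega)
      have h₃ := radInv_nonneg (q / 2)
      have h₄ := radInv_nonneg (q' / 2)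
      have h₅ : (0:ℝ) ≤ (2 ^ l)⁻¹ := by positivity
      rcases Nat.mod_two_eq_zero_or_one q with h | h
      · rw [if_neg (by omega), if_pos (by omega), abs_sub_comm, abs_of_nonneg (by linarith)]
        linarith
      · rw [if_pos h, if_neg (by omega), abs_of_nonneg (by linarith)]
        linarith

lemma radInv_two_pow_add {l r : ℕ} (hr : r < 2 ^ l) :
    radInv (2 ^ l + r) = (2 ^ (l + 1) : ℝ)⁻¹ + radInv r := by
  induction l generalizing r with
  | zero =>
    obtain rfl : r = 0 := by simpa using hr
    norm_num [radInv_eq_mod_add_div 1, radInv]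
  | succ l ih =>
    rw [pow_succ] at hr
    rw [radInv_eq_mod_add_div, radInv_eq_mod_add_div r,
      show (2 ^ (l + 1) + r) % 2 = r % 2 by rw [pow_succ]; omega,
      show (2 ^ (l + 1) + r) / 2 = 2 ^ l + r / 2 by rw [pow_succ]; omega, ih (by omega),
      pow_succ _ (l + 1), mul_inv]
    ring

/-- On the first `2 ^ l` integers, `radInv` is a permutation of the grid `q / 2 ^ l`. -/
lemma sum_range_two_pow_radInv (l : ℕ) (f : ℝ → ℝ) :
    ∑ q ∈ range (2 ^ l), f (radInv q) = ∑ q ∈ range (2 ^ l), f (q / 2 ^ l) := by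
  induction l generalizing f with
  | zero => simp [radInv]
  | succ l ih =>
    rw [pow_succ', sum_range_two_mul, two_mul, sum_range_add]
    simp only [radInv_two_mul, radInv_two_mul_add_one, sum_add_distrib]
    rw [ih fun x => f (x / 2), ih fun x => f (1 / 2 + x / 2)]
    congr 1 <;> refine sum_congr rfl fun q _ => congrArg f ?_ <;> push_cast <;> field_simp <;> ring

noncomputable def step (x t : ℝ) : ℝ := if x < t then 1 else 0

lemma step_nonneg (x t : ℝ) : 0 ≤ step x t := by unfold step; split <;> norm_num

lemma step_le_one (x t : ℝ) : step x t ≤ 1 := by unfold step; split <;> norm_num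

lemma step_mono (x : ℝ) : Monotone (step x) := fun t u htu => by
  unfold step; split_ifs <;> linarith

lemma measurable_step (x : ℝ) : Measurable (step x) :=
  Measurable.ite measurableSet_Ioi measurable_const measurable_const

lemma step_sub_step {x t u : ℝ} (hut : u ≤ t) :
    step x t - step x u = if u ≤ x ∧ x < t then 1 else 0 := by
  rcases lt_or_ge x u with h₁ | h₁
  · simp [step, h₁, h₁.trans_le hut, not_le.2 h₁]
  · rcases lt_or_ge x t with h₂ | h₂
    · simp [step, h₁, h₂, not_lt.2 h₁]
    · simp [step, h₁, not_lt.2 h₁, not_lt.2 h₂]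

lemma integral_step {a b x : ℝ} (hax : a ≤ x) (hxb : x ≤ b) : ∫ t in a..b, step x t = b - x := by
  have hint : ∀ c d, IntervalIntegrable (step x) volume c d :=
    fun _ _ => (step_mono x).intervalIntegrable
  rw [← intervalIntegral.integral_add_adjacent_intervals (hint a x) (hint x b),
    intervalIntegral.integral_congr_ae (g := fun _ => (0:ℝ)) (.of_forall fun t ht => ?_),
    intervalIntegral.integral_congr_ae (a := x) (g := fun _ => (1:ℝ)) (.of_forall fun t ht => ?_)]
  · simp
  · rw [Set.uIoc_of_le hxb] at ht
    simp [step, ht.1]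
  · rw [Set.uIoc_of_le hax] at ht
    simp [step, ht.2]

/-- Unlike `disc`, this counts points `x r < t` without requiring `0 ≤ x r`, and is not
normalized by `n`. -/
noncomputable def countDisc (n : ℕ) (x : ℕ → ℝ) (t : ℝ) : ℝ := ∑ r ∈ range n, step (x r) t - n * t

lemma measurable_countDisc (n : ℕ) (x : ℕ → ℝ) : Measurable (countDisc n x) :=
  (Finset.measurable_sum _ fun r _ => measurable_step (x r)).sub (measurable_const.mul measurable_id)

lemma intervalIntegrable_countDisc (n : ℕ) (x : ℕ → ℝ) (a b : ℝ) :
    IntervalIntegrable (countDisc n x) volume a b := by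
  have hmono : Monotone fun t => ∑ r ∈ range n, step (x r) t :=
    fun t u htu => sum_le_sum fun r _ => step_mono (x r) htu
  exact hmono.intervalIntegrable.sub ((continuous_const_mul (n:ℝ)).intervalIntegrable _ _)

lemma abs_countDisc_le {n : ℕ} (x : ℕ → ℝ) {t : ℝ} (ht : t ∈ Set.Icc (0:ℝ) 1) :
    |countDisc n x t| ≤ n := by
  have h₀ : 0 ≤ ∑ r ∈ range n, step (x r) t := sum_nonneg fun r _ => step_nonneg _ _
  have h₁ : ∑ r ∈ range n, step (x r) t ≤ n := by
    simpa using sum_le_sum fun r (_ : r ∈ range n) => step_le_one (x r) t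
  have := ht.1; have := ht.2
  rw [countDisc, abs_le]
  constructor <;> nlinarith [(n.cast_nonneg : (0:ℝ) ≤ n)]

lemma countDisc_add (m n : ℕ) (x : ℕ → ℝ) (t : ℝ) :
    countDisc (m + n) x t = countDisc m x t + countDisc n (fun r => x (m + r)) t := by
  simp only [countDisc, sum_range_add]
  push_cast
  ring

/-- Among `δ`-separated points at most one lies in a half-open interval of length `δ`, while the
linear part moves by at most `n δ`. -/
lemma abs_countDisc_sub_le_one {n : ℕ} {x : ℕ → ℝ} {δ t u : ℝ}
    (hsep : ∀ r < n, ∀ r' < n, r ≠ r' → δ ≤ |x r - x r'|) (hnδ : n * δ ≤ 1) (htu : |t - u| ≤ δ) :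
    |countDisc n x t - countDisc n x u| ≤ 1 := by
  wlog hut : u ≤ t generalizing t u
  · rw [abs_sub_comm]; exact this (by rwa [abs_sub_comm]) (by linarith)
  have htu' : t - u ≤ δ := by rwa [abs_of_nonneg (by linarith)] at htu
  have hcard : #{r ∈ range n | u ≤ x r ∧ x r < t} ≤ 1 := by
    refine card_le_one.2 fun r hr r' hr' => by_contra fun hne => ?_
    simp only [mem_filter, mem_range] at hr hr'
    have : |x r - x r'| < t - u := abs_sub_lt_iff.2 ⟨by linarith, by linarith⟩
    linarith [hsep r hr.1 r' hr'.1 hne]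
  have hsum : ∑ r ∈ range n, (step (x r) t - step (x r) u) = #{r ∈ range n | u ≤ x r ∧ x r < t} := by
    simp only [step_sub_step hut, sum_boole]
  have hlin : (n:ℝ) * (t - u) ≤ 1 := le_trans (by gcongr) hnδ
  have : (#{r ∈ range n | u ≤ x r ∧ x r < t} : ℝ) ≤ 1 := by exact_mod_cast hcard
  have : (0:ℝ) ≤ n * (t - u) := mul_nonneg n.cast_nonneg (by linarith)
  have hdiff : countDisc n x t - countDisc n x u
      = #{r ∈ range n | u ≤ x r ∧ x r < t} - n * (t - u) := by
    rw [countDisc, countDisc, ← hsum, sum_sub_distrib]; ring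
  rw [hdiff, abs_le]
  constructor <;> linarith

lemma sum_step_grid {n i : ℕ} {h θ t : ℝ} (hi : i < n) (hθ0 : 0 ≤ θ) (hθ : θ ≤ h)
    (ht : t ∈ Set.Ioc (i * h) ((i + 1) * h)) :
    ∑ q ∈ range n, step (θ + q * h) t = i + step (θ + i * h) t := by
  have hh : 0 ≤ h := hθ0.trans hθ
  have hbelow : ∑ q ∈ range i, step (θ + q * h) t = i := by
    have hone : ∀ q ∈ range i, step (θ + q * h) t = 1 := fun q hq => if_pos <| by
      have : (q:ℝ) + 1 ≤ i := by exact_mod_cast mem_range.1 hq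
      nlinarith [ht.1]
    simp [sum_congr rfl hone]
  have habove : ∑ q ∈ Ico (i + 1) n, step (θ + q * h) t = 0 := by
    refine sum_eq_zero fun q hq => if_neg ?_
    have : (i:ℝ) + 1 ≤ q := by exact_mod_cast (mem_Ico.1 hq).1
    nlinarith [ht.2]
  rw [← sum_range_add_sum_Ico _ hi, sum_range_succ, hbelow, habove, add_zero]

lemma integral_countDisc_grid {n i : ℕ} {h θ : ℝ} (hi : i < n) (hnh : n * h = 1) (hθ0 : 0 ≤ θ)
    (hθ : θ ≤ h) :
    ∫ t in i * h..(i + 1) * h, countDisc n (fun q => θ + q * h) t = h / 2 - θ := by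
  have hh : 0 ≤ h := hθ0.trans hθ
  have hab : (i:ℝ) * h ≤ (i + 1) * h := by nlinarith
  rw [intervalIntegral.integral_congr_ae (g := fun t => i + step (θ + i * h) t - n * t)
    (.of_forall fun t ht => ?_)]
  · have hstep := (step_mono (θ + i * h)).intervalIntegrable (μ := volume) (a := i * h)
      (b := (i + 1) * h)
    rw [intervalIntegral.integral_sub (intervalIntegrable_const.add hstep)
        ((continuous_const_mul (n:ℝ)).intervalIntegrable _ _),
      intervalIntegral.integral_add intervalIntegrable_const hstep, intervalIntegral.integral_const,
      integral_step (by linarith) (by linarith), intervalIntegral.integral_const_mul, integral_id]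
    simp only [smul_eq_mul]
    linear_combination (-h * (i + 1 / 2)) * hnh
  · rw [Set.uIoc_of_le hab] at ht
    simp only [countDisc, sum_step_grid hi hθ0 hθ ht]

/-- `symDisc n 0` is `2 n` times the local discrepancy of the first `2 n` terms of `vdcSym`; the
shift `ε` appears when a dyadic block of points is split off (`symDisc_two_pow_add`). -/
noncomputable def symDisc (n : ℕ) (ε t : ℝ) : ℝ :=
  countDisc n (fun r => ε + radInv r) t + countDisc n (fun r => 1 - ε - radInv r) t

lemma measurable_symDisc (n : ℕ) (ε : ℝ) : Measurable (symDisc n ε) :=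
  (measurable_countDisc n _).add (measurable_countDisc n _)

lemma intervalIntegrable_symDisc (n : ℕ) (ε a b : ℝ) :
    IntervalIntegrable (symDisc n ε) volume a b :=
  (intervalIntegrable_countDisc n _ a b).add (intervalIntegrable_countDisc n _ a b)

lemma abs_symDisc_le (n : ℕ) (ε : ℝ) {t : ℝ} (ht : t ∈ Set.Icc (0:ℝ) 1) :
    |symDisc n ε t| ≤ 2 * n := by
  have h₁ : |countDisc n (fun r => ε + radInv r) t| ≤ n := abs_countDisc_le _ ht
  have h₂ : |countDisc n (fun r => 1 - ε - radInv r) t| ≤ n := abs_countDisc_le _ ht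
  exact (abs_add_le _ _).trans (by linarith)

lemma symDisc_two_pow_add {l n : ℕ} (hn : n < 2 ^ l) (ε t : ℝ) :
    symDisc (2 ^ l + n) ε t = symDisc (2 ^ l) ε t + symDisc n (ε + (2 ^ (l + 1))⁻¹) t := by
  have hshift : ∀ r ∈ range n, radInv (2 ^ l + r) = (2 ^ (l + 1) : ℝ)⁻¹ + radInv r :=
    fun r hr => radInv_two_pow_add ((mem_range.1 hr).trans hn)
  have h₁ : countDisc n (fun r => ε + radInv (2 ^ l + r)) t
      = countDisc n (fun r => ε + (2 ^ (l + 1))⁻¹ + radInv r) t := by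
    unfold countDisc
    congr 1
    exact sum_congr rfl fun r hr => by simp only [hshift r hr, add_assoc]
  have h₂ : countDisc n (fun r => 1 - ε - radInv (2 ^ l + r)) t
      = countDisc n (fun r => 1 - (ε + (2 ^ (l + 1))⁻¹) - radInv r) t := by
    unfold countDisc
    congr 1
    exact sum_congr rfl fun r hr => by simp only [hshift r hr]; ring_nf
  simp only [symDisc, countDisc_add, h₁, h₂]
  ring

lemma abs_symDisc_sub_le_two {n l : ℕ} (hn : n ≤ 2 ^ l) (ε : ℝ) {t u : ℝ}
    (htu : |t - u| ≤ (2 ^ l)⁻¹) : |symDisc n ε t - symDisc n ε u| ≤ 2 := by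
  have hsep : ∀ r < n, ∀ r' < n, r ≠ r' → (2 ^ l : ℝ)⁻¹ ≤ |radInv r - radInv r'| :=
    fun r hr r' hr' hne => inv_two_pow_le_abs_radInv_sub (hr.trans_le hn) (hr'.trans_le hn) hne
  have hnδ : (n:ℝ) * (2 ^ l)⁻¹ ≤ 1 := by
    rw [← div_eq_mul_inv, div_le_one (by positivity)]; exact_mod_cast hn
  have h₁ := abs_countDisc_sub_le_one (x := fun r => ε + radInv r)
    (fun r hr r' hr' hne => by simpa using hsep r hr r' hr' hne) hnδ htu
  have h₂ := abs_countDisc_sub_le_one (x := fun r => 1 - ε - radInv r)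
    (fun r hr r' hr' hne => by simpa [abs_sub_comm] using hsep r hr r' hr' hne) hnδ htu
  calc |symDisc n ε t - symDisc n ε u|
      ≤ |countDisc n (fun r => ε + radInv r) t - countDisc n (fun r => ε + radInv r) u|
        + |countDisc n (fun r => 1 - ε - radInv r) t - countDisc n (fun r => 1 - ε - radInv r) u| := by
        rw [symDisc, symDisc, add_sub_add_comm]; exact abs_add_le _ _
    _ ≤ 2 := by linarith

lemma countDisc_add_radInv (l : ℕ) (ε t : ℝ) :
    countDisc (2 ^ l) (fun r => ε + radInv r) t
      = countDisc (2 ^ l) (fun q => ε + q * (2 ^ l)⁻¹) t := by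
  simp only [countDisc, sum_range_two_pow_radInv l fun x => step (ε + x) t, div_eq_mul_inv]

lemma countDisc_sub_radInv (l : ℕ) (ε t : ℝ) :
    countDisc (2 ^ l) (fun r => 1 - ε - radInv r) t
      = countDisc (2 ^ l) (fun q => ((2 ^ l)⁻¹ - ε) + q * (2 ^ l)⁻¹) t := by
  simp only [countDisc, sum_range_two_pow_radInv l fun x => step (1 - ε - x) t]
  rw [← sum_range_reflect]
  congr 1
  refine sum_congr rfl fun q hq => congrArg₂ step ?_ rfl
  have hq : q ≤ 2 ^ l - 1 := Nat.le_sub_one_of_lt (mem_range.1 hq)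
  rw [Nat.cast_sub hq, Nat.cast_sub Nat.one_le_two_pow]
  push_cast
  field_simp
  ring

lemma natCast_two_pow_mul_inv (l : ℕ) : ((2 ^ l : ℕ) : ℝ) * (2 ^ l)⁻¹ = 1 := by
  push_cast; exact mul_inv_cancel₀ (by positivity)

lemma integral_symDisc_two_pow_atom {l i : ℕ} (hi : i < 2 ^ l) {ε : ℝ} (hε0 : 0 ≤ ε)
    (hε : ε ≤ (2 ^ l)⁻¹) :
    ∫ t in i * (2 ^ l)⁻¹..(i + 1) * (2 ^ l)⁻¹, symDisc (2 ^ l) ε t = 0 := by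
  have hnh := natCast_two_pow_mul_inv l
  simp only [symDisc, countDisc_add_radInv, countDisc_sub_radInv]
  rw [intervalIntegral.integral_add (intervalIntegrable_countDisc _ _ _ _)
    (intervalIntegrable_countDisc _ _ _ _), integral_countDisc_grid hi hnh hε0 hε,
    integral_countDisc_grid hi hnh (by linarith) (by linarith)]
  ring

lemma intervalIntegrable_comp_symDisc {g : ℝ → ℝ} (hg : Continuous g) (n : ℕ) (ε : ℝ) :
    IntervalIntegrable (fun t => g (symDisc n ε t)) volume 0 1 :=
  intervalIntegrable_comp_of_abs_le hg (measurable_symDisc n ε) fun t ht =>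
    abs_symDisc_le n ε (Set.Ioc_subset_Icc_self (by rwa [Set.uIoc_of_le zero_le_one] at ht))

/-- On each dyadic interval of length `2⁻ˡ` the block `symDisc (2 ^ l) ε` has mean zero and
oscillation at most `2`, so it acts as a martingale difference for the exponential moment. -/
lemma integral_exp_symDisc_two_pow_add_le_on_atom {l n i : ℕ} (hn : n < 2 ^ l) (hi : i < 2 ^ l)
    {ε lam : ℝ} (hε0 : 0 ≤ ε) (hε : ε ≤ (2 ^ l)⁻¹) (hlam : |lam| ≤ 1 / 4) :
    ∫ t in i * (2 ^ l)⁻¹..(i + 1) * (2 ^ l)⁻¹, Real.exp (lam * symDisc (2 ^ l + n) ε t)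
      ≤ (1 + 16 * lam ^ 2) * ∫ t in i * (2 ^ l)⁻¹..(i + 1) * (2 ^ l)⁻¹,
          Real.exp (lam * symDisc n (ε + (2 ^ (l + 1))⁻¹) t) := by
  set ε' : ℝ := ε + (2 ^ (l + 1))⁻¹
  have hsub := uIcc_atom_subset hi (natCast_two_pow_mul_inv l)
  have hexp : ∀ m η, IntervalIntegrable (fun t => Real.exp (lam * symDisc m η t)) volume
      (i * (2 ^ l)⁻¹) ((i + 1) * (2 ^ l)⁻¹) := fun m η =>
    (intervalIntegrable_comp_symDisc (g := fun x => Real.exp (lam * x)) (by fun_prop) m η).mono_set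
      hsub
  set a : ℝ := i * (2 ^ l)⁻¹
  set b : ℝ := (i + 1) * (2 ^ l)⁻¹
  have hba : b - a = (2 ^ l)⁻¹ := by ring
  have hab : a < b := by linarith [show (0:ℝ) < (2 ^ l)⁻¹ by positivity]
  set c : ℝ := (b - a)⁻¹ * ∫ t in a..b, symDisc n ε' t
  have hGc : ∫ t in a..b, symDisc n ε' t = c * (b - a) := by
    simp only [c]; rw [mul_comm, mul_inv_cancel_left₀ (sub_pos.2 hab).ne']
  have hH0 : ∫ t in a..b, symDisc (2 ^ l) ε t = 0 := integral_symDisc_two_pow_atom hi hε0 hε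
  have hFc : ∫ t in a..b, symDisc (2 ^ l + n) ε t = c * (b - a) := by
    simp only [symDisc_two_pow_add hn]
    rw [intervalIntegral.integral_add (intervalIntegrable_symDisc _ _ _ _)
      (intervalIntegrable_symDisc _ _ _ _), hH0, zero_add, hGc]
  have hosc : ∀ m ≤ 2 ^ l, ∀ η, ∀ t ∈ Set.Icc a b, ∀ u ∈ Set.Icc a b,
      |symDisc m η t - symDisc m η u| ≤ 2 := fun m hm η t ht u hu =>
    abs_symDisc_sub_le_two hm η (abs_sub_le_iff.2 ⟨by linarith [ht.2, hu.1], by linarith [ht.1, hu.2]⟩)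
  have hdev : ∀ t ∈ Set.Icc a b, |symDisc (2 ^ l + n) ε t - c| ≤ 4 := by
    intro t ht
    have h₁ := abs_sub_average_le hab (intervalIntegrable_symDisc _ _ _ _)
      (hosc (2 ^ l) le_rfl ε t ht)
    have h₂ := abs_sub_average_le hab (intervalIntegrable_symDisc _ _ _ _) (hosc n hn.le ε' t ht)
    rw [hH0, mul_zero, sub_zero] at h₁
    rw [symDisc_two_pow_add hn, add_sub_assoc]
    exact (abs_add_le _ _).trans (by linarith)
  calc ∫ t in a..b, Real.exp (lam * symDisc (2 ^ l + n) ε t)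
      ≤ (1 + (lam * 4) ^ 2) * Real.exp (lam * c) * (b - a) :=
        integral_exp_le_of_abs_sub_le hab.le (intervalIntegrable_symDisc _ _ _ _) (hexp _ _) hFc
          hdev (by linarith)
    _ = (1 + 16 * lam ^ 2) * (Real.exp (lam * c) * (b - a)) := by ring
    _ ≤ (1 + 16 * lam ^ 2) * ∫ t in a..b, Real.exp (lam * symDisc n ε' t) := by
        gcongr
        exact exp_mul_le_integral_exp hab.le (intervalIntegrable_symDisc _ _ _ _) (hexp _ _) hGc

lemma integral_exp_symDisc_two_pow_add_le {l n : ℕ} (hn : n < 2 ^ l) {ε lam : ℝ} (hε0 : 0 ≤ ε)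
    (hε : ε ≤ (2 ^ l)⁻¹) (hlam : |lam| ≤ 1 / 4) :
    ∫ t in 0..1, Real.exp (lam * symDisc (2 ^ l + n) ε t)
      ≤ (1 + 16 * lam ^ 2) * ∫ t in 0..1, Real.exp (lam * symDisc n (ε + (2 ^ (l + 1))⁻¹) t) := by
  have hexp : ∀ m η, IntervalIntegrable (fun t => Real.exp (lam * symDisc m η t)) volume 0 1 :=
    fun m η => intervalIntegrable_comp_symDisc (g := fun x => Real.exp (lam * x)) (by fun_prop) m η
  rw [integral_eq_sum_atoms (natCast_two_pow_mul_inv l) (hexp _ _),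
    integral_eq_sum_atoms (natCast_two_pow_mul_inv l) (hexp _ _), mul_sum]
  exact sum_le_sum fun i hi =>
    integral_exp_symDisc_two_pow_add_le_on_atom hn (mem_range.1 hi) hε0 hε hlam

theorem integral_exp_symDisc_le (n : ℕ) {ε lam : ℝ} (hε0 : 0 ≤ ε) (hε : ε < (2 ^ n.size)⁻¹)
    (hlam : |lam| ≤ 1 / 4) :
    ∫ t in 0..1, Real.exp (lam * symDisc n ε t) ≤ Real.exp (16 * lam ^ 2 * n.size) := by
  induction n using Nat.strong_induction_on generalizing ε with
  | _ n ih =>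
  rcases Nat.eq_zero_or_pos n with rfl | hn
  · simp [symDisc, countDisc]
  obtain ⟨l, hl⟩ : ∃ l, n.size = l + 1 := ⟨n.size - 1, by have := Nat.size_pos.2 hn; omega⟩
  have hln : 2 ^ l ≤ n := Nat.lt_size.1 (by omega)
  have hnl : n < 2 ^ (l + 1) := hl ▸ Nat.lt_size_self n
  set r := n - 2 ^ l
  have hr : r < 2 ^ l := by rw [pow_succ] at hnl; omega
  have hrl : (r.size : ℝ) ≤ l := by exact_mod_cast Nat.size_le.2 hr
  have hpow : (2 ^ (l + 1) : ℝ)⁻¹ = (2 ^ l)⁻¹ / 2 := by rw [pow_succ, mul_inv, div_eq_mul_inv]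
  rw [hl, hpow] at hε
  have hε' : ε + (2 ^ (l + 1))⁻¹ < (2 ^ r.size)⁻¹ := by
    calc ε + (2 ^ (l + 1) : ℝ)⁻¹ < (2 ^ l)⁻¹ := by rw [hpow]; linarith
      _ ≤ (2 ^ r.size)⁻¹ := inv_anti₀ (by positivity) (pow_le_pow_right₀ one_le_two (Nat.size_le.2 hr))
  calc ∫ t in 0..1, Real.exp (lam * symDisc n ε t)
      ≤ (1 + 16 * lam ^ 2) * ∫ t in 0..1, Real.exp (lam * symDisc r (ε + (2 ^ (l + 1))⁻¹) t) := by
        rw [show n = 2 ^ l + r by omega]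
        exact integral_exp_symDisc_two_pow_add_le hr hε0 (by linarith) hlam
    _ ≤ Real.exp (16 * lam ^ 2) * Real.exp (16 * lam ^ 2 * r.size) := by
        refine mul_le_mul (by linarith [Real.add_one_le_exp (16 * lam ^ 2)])
          (ih r (by omega) (by positivity) hε') ?_ (Real.exp_pos _).le
        exact intervalIntegral.integral_nonneg zero_le_one fun t _ => (Real.exp_pos _).le
    _ ≤ Real.exp (16 * lam ^ 2 * n.size) := by
        rw [← Real.exp_add, hl]
        gcongr
        push_cast
        nlinarith [sq_nonneg lam]

lemma integral_abs_symDisc_pow_le (m : ℕ) {n : ℕ} (hn : 0 < n) :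
    ∫ t in 0..1, |symDisc n 0 t| ^ m ≤ 2 * Real.exp 1 * m.factorial * (4 * √(n.size)) ^ m := by
  have hs : (1:ℝ) ≤ n.size := by exact_mod_cast Nat.size_pos.2 hn
  have hsqrt : 1 ≤ √(n.size : ℝ) := Real.one_le_sqrt.2 hs
  set lam : ℝ := (4 * √(n.size))⁻¹
  have hlam : 0 < lam := by positivity
  have hlam4 : lam ≤ 1 / 4 := by
    rw [one_div]; exact inv_anti₀ (by norm_num) (by linarith)
  have hmom : ∀ μ : ℝ, μ ^ 2 = lam ^ 2 → |μ| ≤ 1 / 4 →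
      ∫ t in 0..1, Real.exp (μ * symDisc n 0 t) ≤ Real.exp 1 := fun μ hμ hμ4 => by
    have h := integral_exp_symDisc_le n le_rfl (by positivity) hμ4
    rwa [hμ, show 16 * lam ^ 2 * n.size = (1:ℝ) by
      simp only [lam]; field_simp; rw [Real.sq_sqrt (by positivity)]; ring] at h
  have hcont : ∀ μ : ℝ, Continuous fun x : ℝ => Real.exp (μ * x) := fun μ => by fun_prop
  have := integral_abs_pow_le_of_integral_exp_le m zero_le_one hlam
    (intervalIntegrable_comp_symDisc (continuous_abs.pow m) n 0)
    (intervalIntegrable_comp_symDisc (hcont lam) n 0)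
    (intervalIntegrable_comp_symDisc (hcont (-lam)) n 0)
    (hmom lam rfl (by rwa [abs_of_pos hlam])) (hmom (-lam) (neg_sq lam) (by rwa [abs_neg, abs_of_pos hlam]))
  calc _ ≤ _ := this
    _ = _ := by simp only [lam, inv_pow, div_inv_eq_mul]; ring

lemma vdcSym_two_mul (m : ℕ) : vdcSym (2 * m) = radInv m := by
  simp [vdcSym]

lemma vdcSym_two_mul_add_one (m : ℕ) : vdcSym (2 * m + 1) = 1 - radInv m := by
  simp [vdcSym, Nat.add_mod, show (2 * m + 1) / 2 = m by omega]

lemma vdcSym_nonneg (n : ℕ) : 0 ≤ vdcSym n := by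
  unfold vdcSym
  split
  · exact radInv_nonneg _
  · linarith [radInv_lt_one (n / 2)]

lemma indicator_Ico_eq_step {z : ℝ} (hz : 0 ≤ z) (t : ℝ) :
    Set.indicator (Set.Ico 0 t) (fun _ => (1:ℝ)) z = step z t := by
  simp [Set.indicator_apply, step, hz]

lemma natCast_mul_disc_vdcSym {N : ℕ} (hN : N ≠ 0) (t : ℝ) :
    N * disc vdcSym N t
      = symDisc (N / 2) 0 t + if N % 2 = 1 then step (radInv (N / 2)) t - t else 0 := by
  set n := N / 2
  have hpairs : ∑ i ∈ range (2 * n), step (vdcSym i) t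
      = ∑ r ∈ range n, (step (radInv r) t + step (1 - radInv r) t) := by
    rw [sum_range_two_mul]
    simp only [vdcSym_two_mul, vdcSym_two_mul_add_one]
  have hsym : symDisc n 0 t = ∑ r ∈ range n, (step (radInv r) t + step (1 - radInv r) t) - 2 * n * t := by
    simp only [symDisc, countDisc, zero_add, sub_zero, sum_add_distrib]
    ring
  rw [disc, mul_sub, mul_div_cancel₀ _ (Nat.cast_ne_zero.2 hN),
    sum_congr rfl fun i _ => indicator_Ico_eq_step (vdcSym_nonneg i) t, hsym]
  rcases Nat.mod_two_eq_zero_or_one N with hpar | hpar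
  · rw [if_neg (by omega), show N = 2 * n by omega, hpairs]
    push_cast
    ring
  · rw [if_pos hpar, show N = 2 * n + 1 by omega, sum_range_succ, hpairs, vdcSym_two_mul]
    push_cast
    ring

lemma measurable_disc (x : ℕ → ℝ) (N : ℕ) : Measurable (disc x N) := by
  refine ((Finset.measurable_sum _ fun n _ => ?_).div_const _).sub measurable_id
  simp only [Set.indicator_apply, Set.mem_Ico]
  exact Measurable.ite ((MeasurableSet.const _).inter measurableSet_Ioi) measurable_const
    measurable_const

lemma abs_disc_le_one (x : ℕ → ℝ) (N : ℕ) {t : ℝ} (ht : t ∈ Set.Icc (0:ℝ) 1) :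
    |disc x N t| ≤ 1 := by
  set S := ∑ n ∈ range N, Set.indicator (Set.Ico (0:ℝ) t) (fun _ => (1:ℝ)) (x n)
  have hS₀ : 0 ≤ S := sum_nonneg fun n _ => Set.indicator_nonneg (fun _ _ => zero_le_one) _
  have hS₁ : S ≤ N := by
    simpa using sum_le_sum fun n (_ : n ∈ range N) =>
      Set.indicator_le_self' (fun _ _ => (zero_le_one : (0:ℝ) ≤ 1)) (x n)
  have h₀ : 0 ≤ S / N := by positivity
  have h₁ : S / N ≤ 1 := div_le_one_of_le₀ hS₁ N.cast_nonneg
  rw [disc, abs_le]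
  constructor <;> linarith [ht.1, ht.2]

lemma intervalIntegrable_comp_disc {g : ℝ → ℝ} (hg : Continuous g) (x : ℕ → ℝ) (N : ℕ) :
    IntervalIntegrable (fun t => g (disc x N t)) volume 0 1 :=
  intervalIntegrable_comp_of_abs_le hg (measurable_disc x N) fun t ht =>
    abs_disc_le_one x N (Set.Ioc_subset_Icc_self (by rwa [Set.uIoc_of_le zero_le_one] at ht))

lemma abs_natCast_mul_disc_vdcSym_le {N : ℕ} (hN : N ≠ 0) {t : ℝ} (ht : t ∈ Set.Icc (0:ℝ) 1) :
    |N * disc vdcSym N t| ≤ |symDisc (N / 2) 0 t| + 1 := by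
  rw [natCast_mul_disc_vdcSym hN]
  refine (abs_add_le _ _).trans ?_
  gcongr
  split
  · have := step_nonneg (radInv (N / 2)) t
    have := step_le_one (radInv (N / 2)) t
    exact abs_le.2 ⟨by linarith [ht.2], by linarith [ht.1]⟩
  · simp

lemma integral_abs_disc_vdcSym_pow_le (m : ℕ) {N : ℕ} (hN : 2 ≤ N) :
    ∫ t in 0..1, |disc vdcSym N t| ^ m
      ≤ 2 ^ (m - 1) * (2 * Real.exp 1 * m.factorial * 4 ^ m + 1) * √((N / 2).size) ^ m / N ^ m := by
  have hN₀ : (0:ℝ) < N := by positivity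
  have hsqrt : 1 ≤ √((N / 2).size : ℝ) :=
    Real.one_le_sqrt.2 (by exact_mod_cast Nat.size_pos.2 (by omega : 0 < N / 2))
  have hsD : IntervalIntegrable (fun t => |symDisc (N / 2) 0 t| ^ m) volume 0 1 :=
    intervalIntegrable_comp_symDisc (g := fun x => |x| ^ m) (by fun_prop) _ _
  have hpt : ∀ t ∈ Set.Icc (0:ℝ) 1, |disc vdcSym N t| ^ m
      ≤ 2 ^ (m - 1) / N ^ m * (|symDisc (N / 2) 0 t| ^ m + 1) := fun t ht => by
    calc |disc vdcSym N t| ^ m = |N * disc vdcSym N t| ^ m / N ^ m := by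
          rw [abs_mul, mul_pow, abs_of_pos hN₀]; field_simp
      _ ≤ (|symDisc (N / 2) 0 t| + 1) ^ m / N ^ m := by
          gcongr; exact abs_natCast_mul_disc_vdcSym_le (by omega) ht
      _ ≤ 2 ^ (m - 1) * (|symDisc (N / 2) 0 t| ^ m + 1 ^ m) / N ^ m := by
          gcongr; exact add_pow_le (abs_nonneg _) zero_le_one m
      _ = _ := by ring
  calc ∫ t in 0..1, |disc vdcSym N t| ^ m
      ≤ ∫ t in 0..1, 2 ^ (m - 1) / N ^ m * (|symDisc (N / 2) 0 t| ^ m + 1) :=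
        intervalIntegral.integral_mono_on zero_le_one
          (intervalIntegrable_comp_disc (g := fun x => |x| ^ m) (by fun_prop) vdcSym N)
          ((hsD.add intervalIntegrable_const).const_mul _) hpt
    _ = 2 ^ (m - 1) / N ^ m * ((∫ t in 0..1, |symDisc (N / 2) 0 t| ^ m) + 1) := by
        rw [intervalIntegral.integral_const_mul, intervalIntegral.integral_add hsD
          intervalIntegrable_const, intervalIntegral.integral_const, sub_zero, one_smul]
    _ ≤ 2 ^ (m - 1) / N ^ m * (2 * Real.exp 1 * m.factorial * (4 * √((N / 2).size)) ^ m
          + √((N / 2).size) ^ m) := by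
        gcongr
        · exact integral_abs_symDisc_pow_le m (by omega)
        · exact one_le_pow₀ hsqrt
    _ = _ := by ring

lemma size_div_two_le_logb {N : ℕ} (hN : 2 ≤ N) : ((N / 2).size : ℝ) ≤ Real.log N / Real.log 2 := by
  have hsize : 0 < (N / 2).size := Nat.size_pos.2 (by omega)
  have hpow : 2 ^ (N / 2).size ≤ N := by
    obtain ⟨k, hk⟩ : ∃ k, (N / 2).size = k + 1 := ⟨_, (Nat.succ_pred_eq_of_pos hsize).symm⟩
    have : 2 ^ k ≤ N / 2 := Nat.lt_size.1 (by omega)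
    rw [hk, pow_succ]
    omega
  rw [le_div_iff₀ (Real.log_pos one_lt_two), ← Real.log_pow]
  exact Real.log_le_log (by positivity) (by exact_mod_cast hpow)

end VdC

open VdC

theorem Lp_disc_sym_optimal (p : ℝ) (hp : 1 < p) :
    ∃ C > 0, ∀ N : ℕ, 2 ≤ N →
      (∫ t in (0:ℝ)..1, |disc vdcSym N t|^p)^(1/p)
        ≤ C * Real.sqrt (Real.log N) / N := by
  set m := ⌈p⌉₊
  have hm : m ≠ 0 := (Nat.ceil_pos.2 (by linarith)).ne'
  set B : ℝ := 2 ^ (m - 1) * (2 * Real.exp 1 * m.factorial * 4 ^ m + 1)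
  have hB : 0 < B := by positivity
  refine ⟨2 * B ^ (m : ℝ)⁻¹ / √(Real.log 2), by positivity, fun N hN => ?_⟩
  have hs : 0 < √((N / 2).size : ℝ) :=
    Real.sqrt_pos.2 (by exact_mod_cast Nat.size_pos.2 (by omega : 0 < N / 2))
  set Q : ℝ := B ^ (m : ℝ)⁻¹ * √((N / 2).size) / N
  have hQm : Q ^ m = B * √((N / 2).size) ^ m / N ^ m := by
    rw [div_pow, mul_pow, Real.rpow_inv_natCast_pow hB.le hm]
  calc (∫ t in (0:ℝ)..1, |disc vdcSym N t| ^ p) ^ (1 / p)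
      ≤ 2 ^ (1 / p) * Q :=
        integral_rpow_le_of_integral_pow_le (by linarith) (Nat.le_ceil p) (by positivity)
          (intervalIntegrable_comp_disc (continuous_abs.rpow_const fun _ => Or.inr (by linarith))
            vdcSym N)
          (intervalIntegrable_comp_disc (g := fun x => |x| ^ m) (by fun_prop) vdcSym N)
          (hQm ▸ integral_abs_disc_vdcSym_pow_le m hN)
    _ ≤ 2 * Q := by
        gcongr
        exact Real.rpow_le_self_of_one_le one_le_two ((div_le_one (by linarith)).2 hp.le)
    _ ≤ 2 * B ^ (m : ℝ)⁻¹ / √(Real.log 2) * √(Real.log N) / N := by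
        have := Real.sqrt_le_sqrt (size_div_two_le_logb hN)
        rw [Real.sqrt_div' _ (Real.log_nonneg one_le_two)] at this
        calc 2 * Q = 2 * B ^ (m : ℝ)⁻¹ * √((N / 2).size) / N := by ring
          _ ≤ 2 * B ^ (m : ℝ)⁻¹ * (√(Real.log N) / √(Real.log 2)) / N := by gcongr
          _ = _ := by ring
end
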